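/- The entropy of the quantized Laplace source, R(Λ,Q) = -p₀ log₂ p₀ - 2∑_{i=1}^∞ p_i log₂ p_i with p₀ = 1-e^{-ΛQ/2} and p_i = (1/2)e^{-ΛiQ}(e^{ΛQ/2} - e^{-ΛQ/2}), equals -(1-e^{-ΛQ/2})log₂(1-e^{-ΛQ/2}) - (e^{-ΛQ/2}/ln 2)[ln((1-e^{-ΛQ})/2) + ΛQ/2 - ΛQ/(1-e^{-ΛQ})]. -/

import Mathlib

/-!
The cell probabilities form a geometric sequence `p (i + 1) = c * aⁱ` with `a = e^{-ΛQ}` and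
`c = e^{-ΛQ/2} (1 - a) / 2`. Since `log (c * aⁱ) = log c + i log a`, the entropy series splits into
`∑ aⁱ = 1 / (1 - a)` and `∑ i aⁱ = a / (1 - a)²`.
-/

open Real

theorem mul_pow_mul_log_mul_pow (c a : ℝ) (i : ℕ) :
    c * a ^ i * log (c * a ^ i) = c * log c * a ^ i + c * log a * (i * a ^ i) := by
  rcases eq_or_ne c 0 with rfl | hc
  · simp
  rcases eq_or_ne a 0 with rfl | ha
  · cases i <;> simp
  rw [log_mul hc (pow_ne_zero i ha), log_pow]
  ring

theorem hasSum_mul_pow_mul_log_mul_pow {a : ℝ} (ha : ‖a‖ < 1) (c : ℝ) :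
    HasSum (fun i : ℕ => c * a ^ i * log (c * a ^ i))
      (c * log c / (1 - a) + c * a * log a / (1 - a) ^ 2) := by
  have hsum := ((hasSum_geometric_of_norm_lt_one ha).mul_left (c * log c)).add
    ((hasSum_coe_mul_geometric_of_norm_lt_one ha).mul_left (c * log a))
  simp_rw [mul_pow_mul_log_mul_pow c a]
  rw [show c * log c / (1 - a) + c * a * log a / (1 - a) ^ 2
      = c * log c * (1 - a)⁻¹ + c * log a * (a / (1 - a) ^ 2) by ring]
  exact hsum

theorem laplace_cell_prob_eq (Λ Q : ℝ) (i : ℕ) :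
    (1 / 2) * exp (-Λ * ((i + 1 : ℕ) : ℝ) * Q) * (exp (Λ * Q / 2) - exp (-Λ * Q / 2))
      = exp (-Λ * Q / 2) * (1 - exp (-Λ * Q)) / 2 * exp (-Λ * Q) ^ i := by
  have hsplit : exp (-Λ * ((i + 1 : ℕ) : ℝ) * Q)
      = exp (-Λ * Q / 2) * exp (-Λ * Q / 2) * exp (-Λ * Q) ^ i := by
    rw [← exp_nat_mul, ← exp_add, ← exp_add]
    push_cast
    ring_nf
  have hhalf : exp (-Λ * Q / 2) * exp (Λ * Q / 2) = 1 := by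
    rw [← exp_add]; ring_nf; exact exp_zero
  have hfull : exp (-Λ * Q / 2) * exp (-Λ * Q / 2) = exp (-Λ * Q) := by
    rw [← exp_add]; ring_nf
  rw [hsplit]
  linear_combination (exp (-Λ * Q / 2) * exp (-Λ * Q) ^ i / 2) * hhalf
    - (exp (-Λ * Q / 2) * exp (-Λ * Q) ^ i / 2) * hfull

theorem laplace_quantizer_entropy_closed_form (Λ Q : ℝ) (hΛ : 0 < Λ) (hQ : 0 < Q)
    (p0 : ℝ) (hp0 : p0 = 1 - Real.exp (-Λ * Q / 2))
    (p : ℕ → ℝ)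
    (hp : ∀ i : ℕ, p i = (1 / 2) * Real.exp (-Λ * (i : ℝ) * Q)
        * (Real.exp (Λ * Q / 2) - Real.exp (-Λ * Q / 2))) :
    -(p0 * Real.logb 2 p0) - 2 * ∑' i : ℕ, p (i + 1) * Real.logb 2 (p (i + 1))
      = -((1 - Real.exp (-Λ * Q / 2)) * Real.logb 2 (1 - Real.exp (-Λ * Q / 2)))
        - (Real.exp (-Λ * Q / 2) / Real.log 2)
          * (Real.log ((1 - Real.exp (-Λ * Q)) / 2) + Λ * Q / 2
              - Λ * Q / (1 - Real.exp (-Λ * Q))) := by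
  set a := exp (-Λ * Q)
  set c := exp (-Λ * Q / 2) * (1 - a) / 2 with hc_def
  have ha_lt_one : a < 1 := exp_lt_one_iff.mpr (by nlinarith)
  have ha_norm : ‖a‖ < 1 := by rwa [norm_of_nonneg (exp_pos _).le]
  have hgeom : ∀ i : ℕ, p (i + 1) = c * a ^ i := fun i => by
    rw [hp]; exact laplace_cell_prob_eq Λ Q i
  have hseries : ∑' i : ℕ, p (i + 1) * logb 2 (p (i + 1))
      = (c * log c / (1 - a) + c * a * log a / (1 - a) ^ 2) / log 2 := by
    simp_rw [hgeom, logb, mul_div_assoc']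
    rw [tsum_div_const, (hasSum_mul_pow_mul_log_mul_pow ha_norm c).tsum_eq]
  have h1a : 0 < 1 - a := sub_pos.mpr ha_lt_one
  have hlog_c : log c = log ((1 - a) / 2) - Λ * Q / 2 := by
    rw [hc_def, mul_div_assoc, log_mul (exp_pos _).ne' (half_pos h1a).ne', log_exp]
    ring
  have hlog_a : log a = -Λ * Q := log_exp _
  rw [hseries, hp0, hlog_c, hlog_a, hc_def]
  field_simp
  ring
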